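/- arXiv:1610.02473 — 9 statements merged into one kernel-verified Lean document; each statement's English description precedes it below -/
import Mathlib

section
/- Let d be a positive integer and let A ≥ 1 be a real number. Then the function f : ℝ × (EuclideanSpace ℝ (Fin d)) → ℝ defined by f(x, v) = A(x⁴ + ‖v‖⁴) + 3 x² ‖v‖² is convex on all of ℝ × EuclideanSpace ℝ (Fin d). -/
open Set

lemma pow4_cvx (a b s t : ℝ) (ha : 0 ≤ a) (hb : 0 ≤ b) (hab : a + b = 1) :
    (a*s+b*t)^4 ≤ a*s^4+b*t^4 := by
  have h := (Even.convexOn_pow (by decide : Even 4)).2 (Set.mem_univ s) (Set.mem_univ t) ha hb hab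
  simpa using h

set_option maxHeartbeats 1000000 in
lemma scalar_key (A a b x1 x2 n1 n2 n : ℝ) (hA : 1 ≤ A) (ha : 0 ≤ a) (hb : 0 ≤ b)
    (hab : a + b = 1) (hn : 0 ≤ n) (hle : n ≤ a*n1+b*n2) :
    A*((a*x1+b*x2)^4+n^4)+3*(a*x1+b*x2)^2*n^2 ≤
      a*(A*(x1^4+n1^4)+3*x1^2*n1^2)+b*(A*(x2^4+n2^4)+3*x2^2*n2^2) := by
  have h2 : n^2 ≤ (a*n1+b*n2)^2 := pow_le_pow_left₀ hn hle 2
  have h4 : n^4 ≤ (a*n1+b*n2)^4 := pow_le_pow_left₀ hn hle 4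
  have hA0 : 0 ≤ A - 1 := by linarith
  have hA' : (0:ℝ) ≤ A := by linarith
  have t1 : 0 ≤ A * ((a*n1+b*n2)^4 - n^4) := mul_nonneg hA' (sub_nonneg.2 h4)
  have t2 : 0 ≤ (a*x1+b*x2)^2 * ((a*n1+b*n2)^2 - n^2) :=
    mul_nonneg (sq_nonneg _) (sub_nonneg.2 h2)
  have step1 : A*((a*x1+b*x2)^4+n^4)+3*(a*x1+b*x2)^2*n^2 ≤
      A*((a*x1+b*x2)^4+(a*n1+b*n2)^4)+3*(a*x1+b*x2)^2*(a*n1+b*n2)^2 := by linarith [t1, t2]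
  refine step1.trans ?_
  have q1 := pow4_cvx a b x1 x2 ha hb hab
  have q2 := pow4_cvx a b n1 n2 ha hb hab
  have q3 := pow4_cvx a b (x1+n1) (x2+n2) ha hb hab
  have q4 := pow4_cvx a b (x1-n1) (x2-n2) ha hb hab
  have p1 : 0 ≤ (A-1) * (a*x1^4+b*x2^4 - (a*x1+b*x2)^4) := mul_nonneg hA0 (sub_nonneg.2 q1)
  have p2 : 0 ≤ (A-1) * (a*n1^4+b*n2^4 - (a*n1+b*n2)^4) := mul_nonneg hA0 (sub_nonneg.2 q2)
  linarith [p1, p2, q1, q2, q3, q4]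

theorem fch_pointwise_H_convex (d : ℕ) (hd : 0 < d) (A : ℝ) (hA : 1 ≤ A) :
    ConvexOn ℝ (univ : Set (ℝ × EuclideanSpace ℝ (Fin d)))
      (fun p : ℝ × EuclideanSpace ℝ (Fin d) =>
        A * (p.1 ^ 4 + ‖p.2‖ ^ 4) + 3 * p.1 ^ 2 * ‖p.2‖ ^ 2) := by
  refine ⟨convex_univ, ?_⟩
  rintro ⟨x1, v1⟩ - ⟨x2, v2⟩ - a b ha hb hab
  simp only [Prod.smul_mk, Prod.mk_add_mk, smul_eq_mul]
  have hn : ‖a • v1 + b • v2‖ ≤ a * ‖v1‖ + b * ‖v2‖ := by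
    calc ‖a • v1 + b • v2‖ ≤ ‖a • v1‖ + ‖b • v2‖ := norm_add_le _ _
      _ = a * ‖v1‖ + b * ‖v2‖ := by
          rw [norm_smul, norm_smul, Real.norm_of_nonneg ha, Real.norm_of_nonneg hb]
  exact scalar_key A a b x1 x2 ‖v1‖ ‖v2‖ _ hA ha hb hab (norm_nonneg _) hn
end

section
/- Let d be a positive integer and A ≥ 1 a real number. Define h : ℝ × (EuclideanSpace ℝ (Fin d)) → ℝ by h(x, v) = A(x⁴ + ‖v‖⁴) + 3 x² ‖v‖². Then for all a, b ∈ ℝ and all u, w ∈ EuclideanSpace ℝ (Fin d), (h(a, u) + h(b, w))/2 ≥ h((a + b)/2, (u + w)/2). -/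
lemma fch_one (a b p q : ℝ) :
    8*(a^4+b^4+p^4+q^4) + 24*a^2*p^2 + 24*b^2*q^2
      ≥ (a+b)^4 + (p+q)^4 + 3*(a+b)^2*(p+q)^2 := by
  nlinarith [sq_nonneg ((a-b)*(p+q)), sq_nonneg ((a+b)*(p-q)), sq_nonneg ((a-b)*(p-q)),
    sq_nonneg ((a+b)*(p+q)), sq_nonneg (a^2-b^2), sq_nonneg (p^2-q^2),
    sq_nonneg (a*p-b*q), sq_nonneg (a*q-b*p), sq_nonneg ((a-b)^2), sq_nonneg ((p-q)^2),
    sq_nonneg (a^2+b^2-p^2-q^2), sq_nonneg (a*p+b*q),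
    sq_nonneg (a^2-b^2+p^2-q^2), sq_nonneg (a^2-b^2-p^2+q^2)]

lemma fch_quartic (x y : ℝ) : 8*(x^4+y^4) ≥ (x+y)^4 := by
  nlinarith [sq_nonneg ((x-y)*(x+y)), sq_nonneg ((x-y)^2), sq_nonneg (x-y), sq_nonneg (x+y)]

lemma fch_scalar_mid (A a b p q : ℝ) (hA : 1 ≤ A) :
    ((A * (a ^ 4 + p ^ 4) + 3 * a ^ 2 * p ^ 2) +
        (A * (b ^ 4 + q ^ 4) + 3 * b ^ 2 * q ^ 2)) / 2 ≥
      A * (((a + b) / 2) ^ 4 + ((p + q) / 2) ^ 4) +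
        3 * ((a + b) / 2) ^ 2 * ((p + q) / 2) ^ 2 := by
  have h1 := fch_one a b p q
  have h2 := fch_quartic a b
  have h3 := fch_quartic p q
  have hA' : 0 ≤ A - 1 := by linarith
  nlinarith [mul_nonneg hA' (sub_nonneg.mpr h2), mul_nonneg hA' (sub_nonneg.mpr h3)]

theorem fch_pointwise_H_midpoint_convex (d : ℕ) (hd : 0 < d) (A : ℝ) (hA : 1 ≤ A)
    (a b : ℝ) (u w : EuclideanSpace ℝ (Fin d)) :
    ((A * (a ^ 4 + ‖u‖ ^ 4) + 3 * a ^ 2 * ‖u‖ ^ 2) +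
        (A * (b ^ 4 + ‖w‖ ^ 4) + 3 * b ^ 2 * ‖w‖ ^ 2)) / 2 ≥
      A * (((a + b) / 2) ^ 4 + ‖(1 / 2 : ℝ) • (u + w)‖ ^ 4) +
        3 * ((a + b) / 2) ^ 2 * ‖(1 / 2 : ℝ) • (u + w)‖ ^ 2 := by
  set t : ℝ := ‖(1 / 2 : ℝ) • (u + w)‖ with ht
  have ht0 : 0 ≤ t := norm_nonneg _
  have hts : t ≤ (‖u‖ + ‖w‖) / 2 := by
    have hn : ‖(1/2 : ℝ)‖ = 1/2 := by norm_num [Real.norm_eq_abs]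
    rw [ht, norm_smul, hn]
    nlinarith [norm_add_le u w]
  have hA0 : (0 : ℝ) ≤ A := le_trans zero_le_one hA
  have h1 : A * (((a + b) / 2) ^ 4 + t ^ 4) + 3 * ((a + b) / 2) ^ 2 * t ^ 2 ≤
      A * (((a + b) / 2) ^ 4 + ((‖u‖ + ‖w‖) / 2) ^ 4) +
        3 * ((a + b) / 2) ^ 2 * ((‖u‖ + ‖w‖) / 2) ^ 2 := by
    have h4 : t ^ 4 ≤ ((‖u‖ + ‖w‖) / 2) ^ 4 := pow_le_pow_left₀ ht0 hts 4
    have h2 : t ^ 2 ≤ ((‖u‖ + ‖w‖) / 2) ^ 2 := pow_le_pow_left₀ ht0 hts 2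
    nlinarith [sq_nonneg ((a+b)/2)]
  exact le_trans h1 (fch_scalar_mid A a b ‖u‖ ‖w‖ hA)
end

section
/- Let d be a positive integer. For all vectors u, w ∈ EuclideanSpace ℝ (Fin d), (‖u‖⁴ + ‖w‖⁴)/2 − ‖(u + w)/2‖⁴ ≥ (3/8)(‖u‖² − ‖w‖²)². -/
/-!
By the triangle inequality the midpoint has norm at most `(‖u‖ + ‖w‖) / 2`, so the claim reduces
to two nonnegative reals `s = ‖u‖`, `t = ‖w‖`. There the midpoint defect of `x ↦ x ^ 4` is exactly
`3 / 8 * (s ^ 2 - t ^ 2) ^ 2 + (s - t) ^ 4 / 16`.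
-/

theorem pow_four_midpoint_defect (s t : ℝ) :
    (s ^ 4 + t ^ 4) / 2 - ((s + t) / 2) ^ 4 = 3 / 8 * (s ^ 2 - t ^ 2) ^ 2 + (s - t) ^ 4 / 16 := by
  ring

theorem norm_half_smul_add_le {E : Type*} [SeminormedAddCommGroup E] [NormedSpace ℝ E]
    (u w : E) : ‖(1 / 2 : ℝ) • (u + w)‖ ≤ (‖u‖ + ‖w‖) / 2 := by
  rw [norm_smul, Real.norm_of_nonneg (by norm_num), one_div_mul_eq_div]
  gcongr
  exact norm_add_le u w

theorem norm_pow_four_midpoint_defect_ge {E : Type*} [SeminormedAddCommGroup E]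
    [NormedSpace ℝ E] (u w : E) :
    (‖u‖ ^ 4 + ‖w‖ ^ 4) / 2 - ‖(1 / 2 : ℝ) • (u + w)‖ ^ 4 ≥
      3 / 8 * (‖u‖ ^ 2 - ‖w‖ ^ 2) ^ 2 := by
  have hmid : ‖(1 / 2 : ℝ) • (u + w)‖ ^ 4 ≤ ((‖u‖ + ‖w‖) / 2) ^ 4 := by
    gcongr
    exact norm_half_smul_add_le u w
  have hdefect := pow_four_midpoint_defect ‖u‖ ‖w‖
  have hrest : 0 ≤ (‖u‖ - ‖w‖) ^ 4 / 16 := by positivity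
  linarith

theorem norm_quartic_midpoint_defect_general (d : ℕ)
    (u w : EuclideanSpace ℝ (Fin d)) :
    (‖u‖ ^ 4 + ‖w‖ ^ 4) / 2 - ‖(1 / 2 : ℝ) • (u + w)‖ ^ 4 ≥
      3 / 8 * (‖u‖ ^ 2 - ‖w‖ ^ 2) ^ 2 :=
  norm_pow_four_midpoint_defect_ge u w

theorem norm_quartic_midpoint_defect (d : ℕ) (hd : 0 < d)
    (u w : EuclideanSpace ℝ (Fin d)) :
    (‖u‖ ^ 4 + ‖w‖ ^ 4) / 2 - ‖(1 / 2 : ℝ) • (u + w)‖ ^ 4 ≥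
      3 / 8 * (‖u‖ ^ 2 - ‖w‖ ^ 2) ^ 2 :=
  norm_quartic_midpoint_defect_general d u w
end

section
/- Let d be a positive integer, and let ε > 0, A ≥ 1, and η be real numbers with ε⁻² + η ≥ 0. Then the function f_c : ℝ × (EuclideanSpace ℝ (Fin d)) × ℝ → ℝ defined by f_c(x, v, q) = (ε⁻²/2) x⁶ + ((ε⁻² + η)/2) x² + (ε²/2) q² + A(x⁴ + ‖v‖⁴) + 3 x² ‖v‖² is strictly convex on the whole space. -/
set_option maxHeartbeats 1000000

open Set

lemma qf_nonneg (x N : ℝ) : 0 ≤ x^2+N^2+x*N := by nlinarith [sq_nonneg (x+N), sq_nonneg x, sq_nonneg N]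

lemma qf_pos (x N : ℝ) (h : x ≠ 0 ∨ N ≠ 0) : 0 < x^2+N^2+x*N := by
  rcases h with h | h
  · nlinarith [sq_nonneg (x+2*N), sq_nonneg x, pow_pos (abs_pos.2 h) 2, sq_abs x]
  · nlinarith [sq_nonneg (2*x+N), sq_nonneg N, pow_pos (abs_pos.2 h) 2, sq_abs N]

lemma qf_nonneg' (x N : ℝ) : 0 ≤ x^2+N^2-x*N := by nlinarith [sq_nonneg (x-N), sq_nonneg x, sq_nonneg N]

lemma qf_combo (a b x y N M : ℝ) (ha : 0 ≤ a) (hb : 0 ≤ b) (hab : a+b=1) :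
    (a*x+b*y)^2+(a*N+b*M)^2+(a*x+b*y)*(a*N+b*M) ≤ a*(x^2+N^2+x*N) + b*(y^2+M^2+y*M) := by
  have hb' : b = 1 - a := by linarith
  subst hb'
  nlinarith [mul_nonneg (mul_nonneg ha hb) (qf_nonneg (x-y) (N-M))]

lemma qf_combo_lt (a b x y N M : ℝ) (ha : 0 < a) (hb : 0 < b) (hab : a+b=1)
    (hne : x ≠ y ∨ N ≠ M) :
    (a*x+b*y)^2+(a*N+b*M)^2+(a*x+b*y)*(a*N+b*M) < a*(x^2+N^2+x*N) + b*(y^2+M^2+y*M) := by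
  have hb' : b = 1 - a := by linarith
  subst hb'
  have h : x - y ≠ 0 ∨ N - M ≠ 0 := by
    rcases hne with h | h
    · exact Or.inl (sub_ne_zero.2 h)
    · exact Or.inr (sub_ne_zero.2 h)
  nlinarith [mul_pos (mul_pos ha hb) (qf_pos (x-y) (N-M) h)]

lemma qf_combo' (a b x y N M : ℝ) (ha : 0 ≤ a) (hb : 0 ≤ b) (hab : a+b=1) :
    (a*x+b*y)^2+(a*N+b*M)^2-(a*x+b*y)*(a*N+b*M) ≤ a*(x^2+N^2-x*N) + b*(y^2+M^2-y*M) := by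
  have hb' : b = 1 - a := by linarith
  subst hb'
  nlinarith [mul_nonneg (mul_nonneg ha hb) (qf_nonneg' (x-y) (N-M))]

lemma sq_combo (a b u v w : ℝ) (ha : 0 ≤ a) (hb : 0 ≤ b) (hab : a+b=1)
    (hw : 0 ≤ w) (hu : 0 ≤ u) (hv : 0 ≤ v) (h : w ≤ a*u+b*v) : w^2 ≤ a*u^2+b*v^2 := by
  have hb' : b = 1 - a := by linarith
  subst hb'
  nlinarith [mul_nonneg (mul_nonneg ha hb) (sq_nonneg (u-v)), mul_nonneg ha hu, mul_nonneg hb hv]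

lemma sq_combo_lt (a b u v w : ℝ) (ha : 0 < a) (hb : 0 < b) (hab : a+b=1)
    (hw : 0 ≤ w) (hu : 0 ≤ u) (hv : 0 ≤ v) (h : w < a*u+b*v) : w^2 < a*u^2+b*v^2 := by
  have hb' : b = 1 - a := by linarith
  subst hb'
  nlinarith [mul_nonneg (mul_nonneg ha.le hb.le) (sq_nonneg (u-v)), mul_nonneg ha.le hu, mul_nonneg hb.le hv]

lemma key_le (a b x y N M : ℝ) (ha : 0 ≤ a) (hb : 0 ≤ b) (hab : a+b=1) :
    (a*x+b*y)^4 + (a*N+b*M)^4 + 3*(a*x+b*y)^2*(a*N+b*M)^2 ≤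
      a*(x^4+N^4+3*x^2*N^2) + b*(y^4+M^4+3*y^2*M^2) := by
  have hq := sq_combo a b (x^2+N^2+x*N) (y^2+M^2+y*M)
      ((a*x+b*y)^2+(a*N+b*M)^2+(a*x+b*y)*(a*N+b*M)) ha hb hab
      (qf_nonneg _ _) (qf_nonneg _ _) (qf_nonneg _ _) (qf_combo a b x y N M ha hb hab)
  have hp := sq_combo a b (x^2+N^2-x*N) (y^2+M^2-y*M)
      ((a*x+b*y)^2+(a*N+b*M)^2-(a*x+b*y)*(a*N+b*M)) ha hb hab
      (qf_nonneg' _ _) (qf_nonneg' _ _) (qf_nonneg' _ _) (qf_combo' a b x y N M ha hb hab)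
  nlinarith [hq, hp]

lemma key_lt (a b x y N M : ℝ) (ha : 0 < a) (hb : 0 < b) (hab : a+b=1)
    (hne : x ≠ y ∨ N ≠ M) :
    (a*x+b*y)^4 + (a*N+b*M)^4 + 3*(a*x+b*y)^2*(a*N+b*M)^2 <
      a*(x^4+N^4+3*x^2*N^2) + b*(y^4+M^4+3*y^2*M^2) := by
  have hq := sq_combo_lt a b (x^2+N^2+x*N) (y^2+M^2+y*M)
      ((a*x+b*y)^2+(a*N+b*M)^2+(a*x+b*y)*(a*N+b*M)) ha hb hab
      (qf_nonneg _ _) (qf_nonneg _ _) (qf_nonneg _ _) (qf_combo_lt a b x y N M ha hb hab hne)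
  have hp := sq_combo a b (x^2+N^2-x*N) (y^2+M^2-y*M)
      ((a*x+b*y)^2+(a*N+b*M)^2-(a*x+b*y)*(a*N+b*M)) ha.le hb.le hab
      (qf_nonneg' _ _) (qf_nonneg' _ _) (qf_nonneg' _ _) (qf_combo' a b x y N M ha.le hb.le hab)
  nlinarith [hq, hp]

theorem fch_convex_part_strictly_convex (d : ℕ) (hd : 0 < d)
    (ε A η : ℝ) (hε : 0 < ε) (hA : 1 ≤ A) (hη : 0 ≤ (ε ^ 2)⁻¹ + η) :
    StrictConvexOn ℝ (univ : Set (ℝ × EuclideanSpace ℝ (Fin d) × ℝ))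
      (fun p : ℝ × EuclideanSpace ℝ (Fin d) × ℝ =>
        (ε ^ 2)⁻¹ / 2 * p.1 ^ 6 + ((ε ^ 2)⁻¹ + η) / 2 * p.1 ^ 2 +
          ε ^ 2 / 2 * p.2.2 ^ 2 + A * (p.1 ^ 4 + ‖p.2.1‖ ^ 4) +
          3 * p.1 ^ 2 * ‖p.2.1‖ ^ 2) := by
  refine ⟨convex_univ, ?_⟩
  rintro ⟨x, v, r⟩ - ⟨y, w, s⟩ - hne a b ha hb hab
  simp only [Prod.smul_mk, Prod.mk_add_mk, smul_eq_mul]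
  set N := ‖v‖ with hN
  set M := ‖w‖ with hM
  set n := ‖a • v + b • w‖ with hn
  have hN0 : 0 ≤ N := norm_nonneg _
  have hM0 : 0 ≤ M := norm_nonneg _
  have hn0 : 0 ≤ n := norm_nonneg _
  have hnle : n ≤ a * N + b * M := by
    refine (norm_add_le _ _).trans ?_
    rw [norm_smul, norm_smul, Real.norm_eq_abs, Real.norm_eq_abs, abs_of_pos ha, abs_of_pos hb]
  have hm0 : 0 ≤ a * N + b * M := le_trans hn0 hnle
  -- coefficients
  have hk1 : 0 < (ε ^ 2)⁻¹ / 2 := by positivity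
  have hk2 : 0 ≤ ((ε ^ 2)⁻¹ + η) / 2 := by linarith
  have hk3 : 0 < ε ^ 2 / 2 := by positivity
  have hA0 : 0 < A := lt_of_lt_of_le one_pos hA
  -- basic scalar convexity facts
  have h6 : (a*x+b*y)^6 ≤ a*x^6+b*y^6 := by
    have := (Even.convexOn_pow (by decide : Even 6)).2 (mem_univ x) (mem_univ y) ha.le hb.le hab
    simpa using this
  have h2 : (a*x+b*y)^2 ≤ a*x^2+b*y^2 := by
    have := (Even.convexOn_pow (by decide : Even 2)).2 (mem_univ x) (mem_univ y) ha.le hb.le hab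
    simpa using this
  have hr2 : (a*r+b*s)^2 ≤ a*r^2+b*s^2 := by
    have := (Even.convexOn_pow (by decide : Even 2)).2 (mem_univ r) (mem_univ s) ha.le hb.le hab
    simpa using this
  have h4x : (a*x+b*y)^4 ≤ a*x^4+b*y^4 := by
    have := (Even.convexOn_pow (by decide : Even 4)).2 (mem_univ x) (mem_univ y) ha.le hb.le hab
    simpa using this
  have h4m : (a*N+b*M)^4 ≤ a*N^4+b*M^4 := by
    have := (Even.convexOn_pow (by decide : Even 4)).2 (mem_univ N) (mem_univ M) ha.le hb.le hab
    simpa using this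
  -- monotonicity in n
  have hmono4 : n^4 ≤ (a*N+b*M)^4 := pow_le_pow_left₀ hn0 hnle 4
  have hmono2 : (a*x+b*y)^2*n^2 ≤ (a*x+b*y)^2*(a*N+b*M)^2 :=
    mul_le_mul_of_nonneg_left (pow_le_pow_left₀ hn0 hnle 2) (sq_nonneg _)
  have hAmono4 : A*n^4 ≤ A*(a*N+b*M)^4 := mul_le_mul_of_nonneg_left hmono4 hA0.le
  -- the (A-1) part
  have hsplit : (A-1)*((a*x+b*y)^4+(a*N+b*M)^4) ≤ (A-1)*(a*(x^4+N^4)+b*(y^4+M^4)) :=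
    mul_le_mul_of_nonneg_left (by linarith) (by linarith)
  by_cases hxNyM : x ≠ y ∨ N ≠ M
  · have hkey := key_lt a b x y N M ha hb hab hxNyM
    linarith [hkey, hsplit, hAmono4, hmono2, mul_le_mul_of_nonneg_left h6 hk1.le,
      mul_le_mul_of_nonneg_left h2 hk2, mul_le_mul_of_nonneg_left hr2 hk3.le]
  · push_neg at hxNyM
    obtain ⟨hxy, hNM⟩ := hxNyM
    have hkey := key_le a b x y N M ha.le hb.le hab
    by_cases hrs : r = s
    · -- v ≠ w, with equal norms: strict norm inequality
      have hvw : v ≠ w := by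
        intro hv
        exact hne (by simp [hxy, hv, hrs])
      have hlt : n < a*N+b*M := by
        have h1 : ‖w‖ ≤ N := le_of_eq hNM.symm
        have := norm_combo_lt_of_ne (le_refl N) h1 hvw ha hb hab
        calc n < N := this
          _ = a*N+b*M := by rw [← hNM]; linear_combination (-N) * hab
      have hstrict4 : A*n^4 < A*(a*N+b*M)^4 :=
        mul_lt_mul_of_pos_left (pow_lt_pow_left₀ hlt hn0 (by norm_num)) hA0
      linarith [hkey, hsplit, hstrict4, hmono2, mul_le_mul_of_nonneg_left h6 hk1.le,
        mul_le_mul_of_nonneg_left h2 hk2, mul_le_mul_of_nonneg_left hr2 hk3.le]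
    · -- r ≠ s : strict in the q-term
      have hr2s : (a*r+b*s)^2 < a*r^2+b*s^2 := by
        have := (Even.strictConvexOn_pow (by decide : Even 2) (by norm_num)).2
          (mem_univ r) (mem_univ s) hrs ha hb hab
        simpa using this
      linarith [hkey, hsplit, hAmono4, hmono2, mul_le_mul_of_nonneg_left h6 hk1.le,
        mul_le_mul_of_nonneg_left h2 hk2, mul_lt_mul_of_pos_left hr2s hk3]
end

section
/- Let E be a real Hilbert space and let F_c, F_e : E → ℝ be convex functions on E. Suppose φ, ψ ∈ E, and suppose g_c ∈ E is a gradient of F_c at φ (i.e. F_c has gradient g_c at φ) and g_e ∈ E is a gradient of F_e at ψ. Then (F_c(φ) − F_e(φ)) − (F_c(ψ) − F_e(ψ)) ≤ ⟪g_c − g_e, φ − ψ⟫. -/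
open scoped RealInnerProductSpace

lemma grad_ineq
    {E : Type*} [NormedAddCommGroup E] [InnerProductSpace ℝ E] [CompleteSpace E]
    (f : E → ℝ) (hf : ConvexOn ℝ Set.univ f) (x y g : E)
    (hg : HasGradientAt f g x) : f x - f y ≤ ⟪g, x - y⟫ := by
  set L : ℝ →ᵃ[ℝ] E := AffineMap.lineMap y x with hL
  have hconv : ConvexOn ℝ Set.univ (f ∘ L) := by
    have := hf.comp_affineMap L
    simpa [Set.preimage_univ] using this
  have hline : ∀ t : ℝ, HasDerivAt (fun t : ℝ => L t) (x - y) t := by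
    intro t
    simpa [hL, AffineMap.lineMap_apply] using
      ((hasDerivAt_id t).smul_const (x - y)).add_const y
  have hderiv : HasDerivAt (f ∘ L) ⟪g, x - y⟫ 1 := by
    have hfd : HasFDerivAt f (InnerProductSpace.toDual ℝ E g : E →L[ℝ] ℝ) x :=
      hg.hasFDerivAt
    have hL1 : L 1 = x := by simp [hL]
    have := (hL1 ▸ hfd).comp_hasDerivAt 1 (hline 1)
    simpa using this
  have := hconv.slope_le_of_hasDerivAt (Set.mem_univ 0) (Set.mem_univ 1)
      one_pos hderiv
  have h01 : slope (f ∘ L) 0 1 = f x - f y := by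
    simp [slope, hL, AffineMap.lineMap_apply]
  linarith [h01 ▸ this]

theorem convex_splitting_inequality
    {E : Type*} [NormedAddCommGroup E] [InnerProductSpace ℝ E] [CompleteSpace E]
    (Fc Fe : E → ℝ)
    (hFc : ConvexOn ℝ Set.univ Fc) (hFe : ConvexOn ℝ Set.univ Fe)
    (φ ψ gc ge : E)
    (hgc : HasGradientAt Fc gc φ) (hge : HasGradientAt Fe ge ψ) :
    (Fc φ - Fe φ) - (Fc ψ - Fe ψ) ≤ ⟪gc - ge, φ - ψ⟫ := by
  have h1 := grad_ineq Fc hFc φ ψ gc hgc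
  have h2 := grad_ineq Fe hFe ψ φ ge hge
  have : ⟪gc - ge, φ - ψ⟫ = ⟪gc, φ - ψ⟫ + ⟪ge, ψ - φ⟫ := by
    rw [inner_sub_left]
    have : (ψ - φ) = -(φ - ψ) := by abel
    rw [this, inner_neg_right]; ring
  linarith [this ▸ (add_le_add h1 h2)]
end

section
/- Let E be a real Hilbert space, let F_c, F_e : E → ℝ be convex functions, and let g_c, g_e : E → E be maps such that for every z ∈ E, F_c has gradient g_c(z) at z and F_e has gradient g_e(z) at z. Let M : E →L[ℝ] E be a self-adjoint continuous linear operator with ⟪M z, z⟫ ≥ 0 for all z ∈ E, and let s ≥ 0. If x, x' ∈ E satisfy x' − x = −s • M(g_c(x') − g_e(x)), then F_c(x') − F_e(x') ≤ F_c(x) − F_e(x). -/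
/-!
Convexity gives the first-order bounds `Fc x' - Fc x ≤ ⟪gc x', x' - x⟫` (tangent plane at `x'`)
and `Fe x' - Fe x ≥ ⟪ge x, x' - x⟫` (tangent plane at `x`), so the energy changes by at most
`⟪gc x' - ge x, x' - x⟫`. The scheme makes this equal to `-s ⟪M d, d⟫` with `d = gc x' - ge x`,
which is nonpositive.
-/

open scoped RealInnerProductSpace

open AffineMap in
theorem ConvexOn.add_fderiv_le {E : Type*} [NormedAddCommGroup E] [NormedSpace ℝ E]
    {s : Set E} {f : E → ℝ} {f' : E →L[ℝ] ℝ} {y z : E} (hf : ConvexOn ℝ s f)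
    (hy : y ∈ s) (hz : z ∈ s) (hf' : HasFDerivAt f f' y) :
    f y + f' (z - y) ≤ f z := by
  set ℓ : ℝ →ᵃ[ℝ] E := lineMap y z
  have hℓ0 : ℓ 0 = y := lineMap_apply_zero y z
  have hℓ1 : ℓ 1 = z := lineMap_apply_one y z
  have hline : ConvexOn ℝ (ℓ ⁻¹' s) (f ∘ ℓ) := hf.comp_affineMap ℓ
  have hderiv : HasDerivAt (f ∘ ℓ) (f' (z - y)) 0 :=
    (hℓ0 ▸ hf').comp_hasDerivAt (0 : ℝ) hasDerivAt_lineMap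
  have hslope := hline.le_slope_of_hasDerivAt (x := 0) (y := 1)
    (by rwa [Set.mem_preimage, hℓ0]) (by rwa [Set.mem_preimage, hℓ1]) one_pos hderiv
  rw [slope_def_field, Function.comp_apply, Function.comp_apply, hℓ0, hℓ1] at hslope
  linarith

theorem ConvexOn.add_inner_le_of_hasGradientAt {E : Type*} [NormedAddCommGroup E]
    [InnerProductSpace ℝ E] [CompleteSpace E] {s : Set E} {f : E → ℝ} {g y z : E}
    (hf : ConvexOn ℝ s f) (hy : y ∈ s) (hz : z ∈ s) (hg : HasGradientAt f g y) :
    f y + ⟪g, z - y⟫ ≤ f z := by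
  simpa using hf.add_fderiv_le hy hz (hasGradientAt_iff_hasFDerivAt.mp hg)

theorem sub_sub_sub_le_inner_of_convexOn {E : Type*} [NormedAddCommGroup E]
    [InnerProductSpace ℝ E] [CompleteSpace E] {s : Set E} {Fc Fe : E → ℝ} {gc ge x x' : E}
    (hFc : ConvexOn ℝ s Fc) (hFe : ConvexOn ℝ s Fe) (hx : x ∈ s) (hx' : x' ∈ s)
    (hgc : HasGradientAt Fc gc x') (hge : HasGradientAt Fe ge x) :
    (Fc x' - Fe x') - (Fc x - Fe x) ≤ ⟪gc - ge, x' - x⟫ := by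
  have hc := hFc.add_inner_le_of_hasGradientAt hx' hx hgc
  have he := hFe.add_inner_le_of_hasGradientAt hx hx' hge
  rw [← neg_sub x' x, inner_neg_right] at hc
  rw [inner_sub_left]
  linarith

theorem inner_neg_smul_apply_nonpos {E : Type*} [NormedAddCommGroup E] [InnerProductSpace ℝ E]
    {M : E →L[ℝ] E} (hM : ∀ z, 0 ≤ ⟪M z, z⟫) {s : ℝ} (hs : 0 ≤ s) (d : E) :
    ⟪d, -(s • M d)⟫ ≤ 0 := by
  rw [inner_neg_right, real_inner_smul_right, real_inner_comm, neg_nonpos]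
  exact mul_nonneg hs (hM d)

theorem convex_splitting_energy_stability_general
    {E : Type*} [NormedAddCommGroup E] [InnerProductSpace ℝ E] [CompleteSpace E]
    (Fc Fe : E → ℝ)
    (hFc : ConvexOn ℝ Set.univ Fc) (hFe : ConvexOn ℝ Set.univ Fe)
    (gc ge : E → E)
    (hgc : ∀ z, HasGradientAt Fc (gc z) z) (hge : ∀ z, HasGradientAt Fe (ge z) z)
    (M : E →L[ℝ] E) (hMpos : ∀ z, 0 ≤ ⟪M z, z⟫)
    (s : ℝ) (hs : 0 ≤ s) (x x' : E)
    (hstep : x' - x = -(s • M (gc x' - ge x))) :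
    Fc x' - Fe x' ≤ Fc x - Fe x := by
  have hdecay := sub_sub_sub_le_inner_of_convexOn hFc hFe trivial trivial (hgc x') (hge x)
  rw [hstep] at hdecay
  linarith [inner_neg_smul_apply_nonpos hMpos hs (gc x' - ge x)]

theorem convex_splitting_energy_stability
    {E : Type*} [NormedAddCommGroup E] [InnerProductSpace ℝ E] [CompleteSpace E]
    (Fc Fe : E → ℝ)
    (hFc : ConvexOn ℝ Set.univ Fc) (hFe : ConvexOn ℝ Set.univ Fe)
    (gc ge : E → E)
    (hgc : ∀ z, HasGradientAt Fc (gc z) z) (hge : ∀ z, HasGradientAt Fe (ge z) z)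
    (M : E →L[ℝ] E) (hM : IsSelfAdjoint M) (hMpos : ∀ z, 0 ≤ ⟪M z, z⟫)
    (s : ℝ) (hs : 0 ≤ s) (x x' : E)
    (hstep : x' - x = -(s • M (gc x' - ge x))) :
    Fc x' - Fe x' ≤ Fc x - Fe x :=
  convex_splitting_energy_stability_general Fc Fe hFc hFe gc ge hgc hge M hMpos s hs x x' hstep
end

section
/- Let E be a real Hilbert space, let g : E → E be a monotone map, i.e. ⟪g(x) − g(y), x − y⟫ ≥ 0 for all x, y ∈ E, let M : E →L[ℝ] E be a self-adjoint continuous linear operator with ⟪M z, z⟫ ≥ 0 for all z ∈ E, and let s ≥ 0. Then the map x ↦ x + s • M(g(x)) is injective. -/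
open scoped RealInnerProductSpace

theorem convex_splitting_uniqueness
    {E : Type*} [NormedAddCommGroup E] [InnerProductSpace ℝ E] [CompleteSpace E]
    (g : E → E) (hg : ∀ x y, 0 ≤ ⟪g x - g y, x - y⟫)
    (M : E →L[ℝ] E) (hM : IsSelfAdjoint M) (hMpos : ∀ z, 0 ≤ ⟪M z, z⟫)
    (s : ℝ) (hs : 0 ≤ s) :
    Function.Injective (fun x => x + s • M (g x)) := by
  intro x y h
  simp only at h
  set u := x - y with hu
  set w := g x - g y with hw
  have key : u + s • M w = 0 := by
    have : (x - y) + s • M (g x - g y) = (x + s • M (g x)) - (y + s • M (g y)) := by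
      rw [map_sub, smul_sub]; abel
    rw [hu, hw, this, h, sub_self]
  have hsym : ∀ a b : E, ⟪M a, b⟫ = ⟪M b, a⟫ := fun a b =>
    ((ContinuousLinearMap.isSelfAdjoint_iff_isSymmetric.mp hM) a b).trans
      (real_inner_comm (M b) a)
  have hueq : u = -(s • M w) := eq_neg_of_add_eq_zero_left key
  have h1 : 0 ≤ ⟪w, u⟫ := hg x y
  have h2 : ⟪w, u⟫ = -(s * ⟪M w, w⟫) := by
    rw [hueq, inner_neg_right, real_inner_smul_right, real_inner_comm]
  have hMww : s * ⟪M w, w⟫ = 0 :=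
    le_antisymm (by linarith) (mul_nonneg hs (hMpos w))
  -- Cauchy-Schwarz: s * ⟪M w, u⟫ = 0
  have hMwu : s * ⟪M w, u⟫ = 0 := by
    rcases hs.eq_or_lt with hs0 | hs0
    · rw [← hs0, zero_mul]
    · have hww : ⟪M w, w⟫ = 0 := by
        rcases mul_eq_zero.mp hMww with h' | h'
        · exact absurd h' hs0.ne'
        · exact h'
      set a : ℝ := ⟪M w, u⟫ with ha
      set b : ℝ := ⟪M u, u⟫ with hb
      have hbnn : 0 ≤ b := hMpos u
      have hkey : ∀ t : ℝ, 0 ≤ 2 * t * a + t ^ 2 * b := by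
        intro t
        have hpos := hMpos (w + t • u)
        rw [map_add, map_smul] at hpos
        simp only [inner_add_left, inner_add_right, real_inner_smul_left,
          real_inner_smul_right] at hpos
        have hsymwu : ⟪M u, w⟫ = a := by rw [hsym u w, ha, real_inner_comm]
        rw [hww, hsymwu] at hpos
        nlinarith [hpos]
      have ha0 : a = 0 := by
        rcases hbnn.eq_or_lt with hb0 | hb0
        · have k1 := hkey 1
          have k2 := hkey (-1)
          nlinarith [k1, k2, hb0]
        · have hk := hkey (-a / b)
          have e : 2 * (-a / b) * a + (-a / b) ^ 2 * b = -(a ^ 2 / b) := by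
            field_simp
            ring
          rw [e] at hk
          have h4 : a ^ 2 / b ≤ 0 := by linarith
          have h5 : 0 ≤ a ^ 2 / b := by positivity
          have h6 : a ^ 2 = 0 := by
            rcases div_eq_zero_iff.mp (le_antisymm h4 h5) with h' | h'
            · exact h'
            · exact absurd h' hb0.ne'
          exact pow_eq_zero_iff (by norm_num : (2:ℕ) ≠ 0) |>.mp h6
      rw [ha0, mul_zero]
  -- conclude u = 0
  have hnorm : ⟪u, u⟫ = 0 := by
    nth_rewrite 1 [hueq]
    rw [inner_neg_left, real_inner_smul_left, hMwu, neg_zero]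
  have : u = 0 := by
    rwa [real_inner_self_eq_norm_sq, pow_eq_zero_iff (by norm_num : 2 ≠ 0), norm_eq_zero] at hnorm
  exact sub_eq_zero.mp this
end

section
/- Fix an integer m ≥ 2, a real h > 0 and a real A. For all periodic grid functions φ, ψ : (ZMod m) × (ZMod m) → ℝ, the map t ↦ H_h(φ + t·ψ) from ℝ to ℝ is differentiable at t = 0 with derivative ⟨δH_h(φ), ψ⟩₂, where δH_h(φ) = 4Aφ³ − 4A(𝔡ₓ(w·𝔇ₓφ) + 𝔡_y(w·𝔇_yφ)) + 6φ·𝔄(w) − 6(𝔡ₓ(𝔞(φ²)·𝔇ₓφ) + 𝔡_y(𝔞(φ²)·𝔇_yφ)) and w = (𝔇ₓφ)² + (𝔇_yφ)² (all operations on grid functions taken pointwise). -/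
/-- Center-to-vertex difference in the x direction: the vertex indexed `(i,j)`
represents the point `(i+1/2, j+1/2)`. -/
noncomputable def Dx (m : ℕ) [NeZero m] (h : ℝ)
    (u : ZMod m × ZMod m → ℝ) : ZMod m × ZMod m → ℝ :=
  fun p => (u (p.1 + 1, p.2 + 1) - u (p.1, p.2 + 1) + u (p.1 + 1, p.2) - u p) / (2 * h)

/-- Center-to-vertex difference in the y direction. -/
noncomputable def Dy (m : ℕ) [NeZero m] (h : ℝ)
    (u : ZMod m × ZMod m → ℝ) : ZMod m × ZMod m → ℝ :=
  fun p => (u (p.1 + 1, p.2 + 1) - u (p.1 + 1, p.2) + u (p.1, p.2 + 1) - u p) / (2 * h)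

/-- Vertex-to-center difference in the x direction. -/
noncomputable def dx (m : ℕ) [NeZero m] (h : ℝ)
    (ν : ZMod m × ZMod m → ℝ) : ZMod m × ZMod m → ℝ :=
  fun p => (ν p - ν (p.1 - 1, p.2) + ν (p.1, p.2 - 1) - ν (p.1 - 1, p.2 - 1)) / (2 * h)

/-- Vertex-to-center difference in the y direction. -/
noncomputable def dy (m : ℕ) [NeZero m] (h : ℝ)
    (ν : ZMod m × ZMod m → ℝ) : ZMod m × ZMod m → ℝ :=
  fun p => (ν p - ν (p.1, p.2 - 1) + ν (p.1 - 1, p.2) - ν (p.1 - 1, p.2 - 1)) / (2 * h)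

/-- Vertex-to-center average. -/
noncomputable def Av (m : ℕ) [NeZero m]
    (ν : ZMod m × ZMod m → ℝ) : ZMod m × ZMod m → ℝ :=
  fun p => (ν p + ν (p.1 - 1, p.2) + ν (p.1, p.2 - 1) + ν (p.1 - 1, p.2 - 1)) / 4

/-- Center-to-vertex average. -/
noncomputable def av (m : ℕ) [NeZero m]
    (u : ZMod m × ZMod m → ℝ) : ZMod m × ZMod m → ℝ :=
  fun p => (u p + u (p.1 + 1, p.2) + u (p.1, p.2 + 1) + u (p.1 + 1, p.2 + 1)) / 4

/-- The grid inner product `⟨u,v⟩₂ = h² Σ u v`. -/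
noncomputable def gridInner (m : ℕ) [NeZero m] (h : ℝ)
    (u v : ZMod m × ZMod m → ℝ) : ℝ :=
  h ^ 2 * ∑ p : ZMod m × ZMod m, u p * v p

/-- The discrete energy `H_h`. -/
noncomputable def Hh (m : ℕ) [NeZero m] (h A : ℝ)
    (φ : ZMod m × ZMod m → ℝ) : ℝ :=
  A * h ^ 2 * ∑ p : ZMod m × ZMod m, φ p ^ 4 +
    A * h ^ 2 * ∑ p : ZMod m × ZMod m, (Dx m h φ p ^ 2 + Dy m h φ p ^ 2) ^ 2 +
    3 * h ^ 2 * ∑ p : ZMod m × ZMod m,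
      φ p ^ 2 * Av m (fun q => Dx m h φ q ^ 2 + Dy m h φ q ^ 2) p

/-- The first variational derivative `δH_h` of the discrete energy `H_h`. -/
noncomputable def deltaHh (m : ℕ) [NeZero m] (h A : ℝ)
    (φ : ZMod m × ZMod m → ℝ) : ZMod m × ZMod m → ℝ :=
  fun p =>
    4 * A * φ p ^ 3 -
      4 * A * (dx m h (fun q => (Dx m h φ q ^ 2 + Dy m h φ q ^ 2) * Dx m h φ q) p +
        dy m h (fun q => (Dx m h φ q ^ 2 + Dy m h φ q ^ 2) * Dy m h φ q) p) +
      6 * φ p * Av m (fun q => Dx m h φ q ^ 2 + Dy m h φ q ^ 2) p -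
      6 * (dx m h (fun q => av m (fun r => φ r ^ 2) q * Dx m h φ q) p +
        dy m h (fun q => av m (fun r => φ r ^ 2) q * Dy m h φ q) p)
/-!
Along the line `φ + t ψ` every term of `H_h` is a polynomial in `t`, so the derivative at `0`
is computed term by term. The terms in which `ψ` enters through `𝔇ₓψ`, `𝔇_yψ` or `𝔄` are moved
onto `ψ` by summation by parts: on the torus `(ZMod m)²` a shift of the summation index is a
bijection, which makes `-𝔡ₓ`, `-𝔡_y` and `𝔞` the adjoints of `𝔇ₓ`, `𝔇_y` and `𝔄`.
-/

section SummationByParts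

variable {m : ℕ} [NeZero m]

lemma sum_mul_apply_add_eq {G : Type*} [AddGroup G] [Fintype G] (ν u : G → ℝ) (c : G) :
    ∑ p, ν p * u (p + c) = ∑ p, ν (p - c) * u p :=
  ((Equiv.subRight c).sum_comp _).symm.trans (by simp)

lemma sum_mul_apply_prod_add_eq (ν u : ZMod m × ZMod m → ℝ) (a b : ZMod m) :
    ∑ p : ZMod m × ZMod m, ν p * u (p.1 + a, p.2 + b) =
      ∑ p : ZMod m × ZMod m, ν (p.1 - a, p.2 - b) * u p :=
  sum_mul_apply_add_eq ν u (a, b)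

lemma sum_mul_Dx_eq_neg_sum_dx_mul (h : ℝ) (ν u : ZMod m × ZMod m → ℝ) :
    ∑ p, ν p * Dx m h u p = -∑ p, dx m h ν p * u p := by
  have e11 := sum_mul_apply_prod_add_eq ν u 1 1
  have e01 := sum_mul_apply_prod_add_eq ν u 0 1
  have e10 := sum_mul_apply_prod_add_eq ν u 1 0
  simp only [add_zero, sub_zero] at e01 e10
  simp only [Dx, dx, mul_div_assoc', div_mul_eq_mul_div, ← Finset.sum_div, ← neg_div,
    mul_sub, mul_add, sub_mul, add_mul, Finset.sum_add_distrib, Finset.sum_sub_distrib,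
    e11, e01, e10]
  ring

lemma sum_mul_Dy_eq_neg_sum_dy_mul (h : ℝ) (ν u : ZMod m × ZMod m → ℝ) :
    ∑ p, ν p * Dy m h u p = -∑ p, dy m h ν p * u p := by
  have e11 := sum_mul_apply_prod_add_eq ν u 1 1
  have e01 := sum_mul_apply_prod_add_eq ν u 0 1
  have e10 := sum_mul_apply_prod_add_eq ν u 1 0
  simp only [add_zero, sub_zero] at e01 e10
  simp only [Dy, dy, mul_div_assoc', div_mul_eq_mul_div, ← Finset.sum_div, ← neg_div,
    mul_sub, mul_add, sub_mul, add_mul, Finset.sum_add_distrib, Finset.sum_sub_distrib,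
    e11, e01, e10]
  ring

lemma sum_mul_Av_eq_sum_av_mul (u ν : ZMod m × ZMod m → ℝ) :
    ∑ p, u p * Av m ν p = ∑ p, av m u p * ν p := by
  have e11 := sum_mul_apply_prod_add_eq ν u 1 1
  have e01 := sum_mul_apply_prod_add_eq ν u 0 1
  have e10 := sum_mul_apply_prod_add_eq ν u 1 0
  simp only [add_zero, sub_zero] at e01 e10
  simp only [Av, av, div_mul_eq_mul_div, ← Finset.sum_div, add_mul, Finset.sum_add_distrib,
    mul_comm (u _), e11, e01, e10]

/-- The paper's `w`. -/
noncomputable def gradSq (h : ℝ) (φ : ZMod m × ZMod m → ℝ) : ZMod m × ZMod m → ℝ :=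
  fun q => Dx m h φ q ^ 2 + Dy m h φ q ^ 2

noncomputable def gradDot (h : ℝ) (φ ψ : ZMod m × ZMod m → ℝ) : ZMod m × ZMod m → ℝ :=
  fun q => Dx m h φ q * Dx m h ψ q + Dy m h φ q * Dy m h ψ q

noncomputable def divWeightedGrad (h : ℝ) (ν φ : ZMod m × ZMod m → ℝ) :
    ZMod m × ZMod m → ℝ :=
  fun p => dx m h (fun q => ν q * Dx m h φ q) p + dy m h (fun q => ν q * Dy m h φ q) p

lemma sum_mul_gradDot_eq_neg_sum_divWeightedGrad_mul (h : ℝ) (ν φ ψ : ZMod m × ZMod m → ℝ) :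
    ∑ p, ν p * gradDot h φ ψ p = -∑ p, divWeightedGrad h ν φ p * ψ p := by
  have hx := sum_mul_Dx_eq_neg_sum_dx_mul h (fun q => ν q * Dx m h φ q) ψ
  have hy := sum_mul_Dy_eq_neg_sum_dy_mul h (fun q => ν q * Dy m h φ q) ψ
  simp only [gradDot, divWeightedGrad, add_mul, Finset.sum_add_distrib, neg_add, ← hx, ← hy,
    mul_add, mul_assoc]

end SummationByParts

section LineDerivatives

variable {m : ℕ} [NeZero m] (h : ℝ) (φ ψ : ZMod m × ZMod m → ℝ)

lemma Dx_add_smul (t : ℝ) : Dx m h (φ + t • ψ) = Dx m h φ + t • Dx m h ψ := by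
  ext p; simp only [Dx, Pi.add_apply, Pi.smul_apply, smul_eq_mul]; ring

lemma Dy_add_smul (t : ℝ) : Dy m h (φ + t • ψ) = Dy m h φ + t • Dy m h ψ := by
  ext p; simp only [Dy, Pi.add_apply, Pi.smul_apply, smul_eq_mul]; ring

lemma hasDerivAt_apply_add_smul {α : Type*} (f g : α → ℝ) (p : α) :
    HasDerivAt (fun t : ℝ => (f + t • g) p) (g p) 0 := by
  simpa using ((hasDerivAt_id (0 : ℝ)).mul_const (g p)).const_add (f p)

lemma hasDerivAt_Av {ν : ℝ → ZMod m × ZMod m → ℝ} {ν' : ZMod m × ZMod m → ℝ} {x : ℝ}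
    (hν : ∀ q, HasDerivAt (fun t => ν t q) (ν' q) x) (p : ZMod m × ZMod m) :
    HasDerivAt (fun t => Av m (ν t) p) (Av m ν' p) x :=
  ((((hν p).add (hν _)).add (hν _)).add (hν _)).div_const 4

lemma hasDerivAt_gradSq_add_smul (q : ZMod m × ZMod m) :
    HasDerivAt (fun t : ℝ => gradSq h (φ + t • ψ) q) (2 * gradDot h φ ψ q) 0 := by
  simp only [gradSq, Dx_add_smul, Dy_add_smul]
  refine (((hasDerivAt_apply_add_smul _ _ q).fun_pow 2).fun_add
    ((hasDerivAt_apply_add_smul _ _ q).fun_pow 2)).congr_deriv ?_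
  simp only [gradDot, zero_smul, add_zero]
  ring

lemma hasDerivAt_sum_pow_four_add_smul {α : Type*} [Fintype α] (f g : α → ℝ) :
    HasDerivAt (fun t : ℝ => ∑ p, (f + t • g) p ^ 4) (∑ p, 4 * f p ^ 3 * g p) 0 :=
  HasDerivAt.fun_sum fun p _ => by simpa using (hasDerivAt_apply_add_smul f g p).fun_pow 4

lemma hasDerivAt_sum_gradSq_sq_add_smul :
    HasDerivAt (fun t : ℝ => ∑ p, gradSq h (φ + t • ψ) p ^ 2)
      (∑ p, -4 * divWeightedGrad h (gradSq h φ) φ p * ψ p) 0 := by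
  refine (HasDerivAt.fun_sum fun p _ =>
    (hasDerivAt_gradSq_add_smul h φ ψ p).fun_pow 2).congr_deriv ?_
  have key := sum_mul_gradDot_eq_neg_sum_divWeightedGrad_mul h (gradSq h φ) φ ψ
  simp only [zero_smul, add_zero]
  calc _ = ∑ p, 4 * (gradSq h φ p * gradDot h φ ψ p) :=
        Finset.sum_congr rfl fun p _ => by ring
    _ = ∑ p, -4 * (divWeightedGrad h (gradSq h φ) φ p * ψ p) := by
        rw [← Finset.mul_sum, ← Finset.mul_sum, key]; ring
    _ = _ := Finset.sum_congr rfl fun p _ => by ring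

lemma hasDerivAt_sum_sq_mul_Av_gradSq_add_smul :
    HasDerivAt (fun t : ℝ => ∑ p, (φ + t • ψ) p ^ 2 * Av m (gradSq h (φ + t • ψ)) p)
      (∑ p, (2 * φ p * Av m (gradSq h φ) p -
        2 * divWeightedGrad h (av m fun r => φ r ^ 2) φ p) * ψ p) 0 := by
  refine (HasDerivAt.fun_sum fun p _ => ((hasDerivAt_apply_add_smul φ ψ p).fun_pow 2).fun_mul
    (hasDerivAt_Av (hasDerivAt_gradSq_add_smul h φ ψ) p)).congr_deriv ?_
  have hAv := sum_mul_Av_eq_sum_av_mul (fun r => φ r ^ 2) (gradDot h φ ψ)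
  have key := sum_mul_gradDot_eq_neg_sum_divWeightedGrad_mul h (av m fun r => φ r ^ 2) φ ψ
  simp only [zero_smul, add_zero]
  calc _ = ∑ p, 2 * (φ p * Av m (gradSq h φ) p * ψ p) +
        2 * ∑ p, φ p ^ 2 * Av m (gradDot h φ ψ) p := by
        rw [Finset.mul_sum, ← Finset.sum_add_distrib]
        exact Finset.sum_congr rfl fun p _ => by simp only [Av]; ring
    _ = ∑ p, 2 * (φ p * Av m (gradSq h φ) p * ψ p) -
        ∑ p, 2 * (divWeightedGrad h (av m fun r => φ r ^ 2) φ p * ψ p) := by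
        rw [hAv, key, ← Finset.mul_sum, ← Finset.mul_sum]; ring
    _ = _ := by
        rw [← Finset.sum_sub_distrib]; exact Finset.sum_congr rfl fun p _ => by ring

end LineDerivatives

theorem Hh_first_variation_general (m : ℕ) [NeZero m]
    (h : ℝ) (A : ℝ)
    (φ ψ : ZMod m × ZMod m → ℝ) :
    HasDerivAt (fun t : ℝ => Hh m h A (φ + t • ψ))
      (gridInner m h (deltaHh m h A φ) ψ) 0 := by
  have hE := (((hasDerivAt_sum_pow_four_add_smul φ ψ).const_mul (A * h ^ 2)).add
    ((hasDerivAt_sum_gradSq_sq_add_smul h φ ψ).const_mul (A * h ^ 2))).add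
    ((hasDerivAt_sum_sq_mul_Av_gradSq_add_smul h φ ψ).const_mul (3 * h ^ 2))
  refine hE.congr_deriv ?_
  simp only [gridInner, Finset.mul_sum, ← Finset.sum_add_distrib]
  refine Finset.sum_congr rfl fun p _ => ?_
  simp only [deltaHh, divWeightedGrad]
  unfold gradSq
  ring

theorem Hh_first_variation (m : ℕ) [NeZero m] (hm : 2 ≤ m)
    (h : ℝ) (hh : 0 < h) (A : ℝ)
    (φ ψ : ZMod m × ZMod m → ℝ) :
    HasDerivAt (fun t : ℝ => Hh m h A (φ + t • ψ))
      (gridInner m h (deltaHh m h A φ) ψ) 0 :=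
  Hh_first_variation_general m h A φ ψ
end

section
/- Fix an integer m ≥ 2, a real h > 0 and a real A ≥ 1. Then the discrete energy H_h, defined on the finite-dimensional real vector space of periodic grid functions φ : (ZMod m) × (ZMod m) → ℝ by H_h(φ) = A h² Σ_{(i,j)} φ(i,j)⁴ + A h² Σ_{(i,j)} ((𝔇ₓφ)(i,j)² + (𝔇_yφ)(i,j)²)² + 3 h² Σ_{(i,j)} φ(i,j)² · (𝔄((𝔇ₓφ)² + (𝔇_yφ)²))(i,j), is strictly convex. -/
open Set

section Helpers

variable {E : Type*} [AddCommGroup E] [Module ℝ E]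

lemma convexOn_add' {f g : E → ℝ} (hf : ConvexOn ℝ (univ : Set E) f)
    (hg : ConvexOn ℝ (univ : Set E) g) :
    ConvexOn ℝ (univ : Set E) (fun x => f x + g x) := hf.add hg

lemma convexOn_smul_pow4 (c : ℝ) (hc : 0 ≤ c) (L : E → ℝ) (hL : IsLinearMap ℝ L) :
    ConvexOn ℝ (univ : Set E) (fun x => c * L x ^ 4) := by
  refine ⟨convex_univ, fun x _ y _ a b ha hb hab => ?_⟩
  have hLs : L (a • x + b • y) = a * L x + b * L y := by
    rw [hL.map_add, hL.map_smul, hL.map_smul]; simp [smul_eq_mul]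
  have h4 := (Even.convexOn_pow (𝕜 := ℝ) (by decide : Even 4)).2
    (mem_univ (L x)) (mem_univ (L y)) ha hb hab
  simp only [smul_eq_mul] at h4 ⊢
  rw [hLs]
  calc c * (a * L x + b * L y) ^ 4 ≤ c * (a * L x ^ 4 + b * L y ^ 4) :=
        mul_le_mul_of_nonneg_left h4 hc
    _ = a * (c * L x ^ 4) + b * (c * L y ^ 4) := by ring

end Helpers
noncomputable def Tm (m : ℕ) [NeZero m] (h A : ℝ) (p : ZMod m × ZMod m)
    (φ : ZMod m × ZMod m → ℝ) : ℝ :=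
  ((A - 1/2) * (2/3)) * ((Dx m h φ p)) ^ 4 +
    ((A - 1/2) * (2/3)) * ((Dy m h φ p)) ^ 4 +
    ((A - 1/2) * (1/6)) * ((Dx m h φ p + Dy m h φ p)) ^ 4 +
    ((A - 1/2) * (1/6)) * ((Dx m h φ p - Dy m h φ p)) ^ 4 +
    (1/24 : ℝ) * ((φ p + Dx m h φ p)) ^ 4 +
    (1/24 : ℝ) * ((φ p - Dx m h φ p)) ^ 4 +
    (1/24 : ℝ) * ((φ p + Dy m h φ p)) ^ 4 +
    (1/24 : ℝ) * ((φ p - Dy m h φ p)) ^ 4 +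
    (1/96 : ℝ) * ((φ p + Dx m h φ p + Dy m h φ p)) ^ 4 +
    (1/96 : ℝ) * ((φ p - Dx m h φ p - Dy m h φ p)) ^ 4 +
    (1/96 : ℝ) * ((φ p + Dx m h φ p - Dy m h φ p)) ^ 4 +
    (1/96 : ℝ) * ((φ p - Dx m h φ p + Dy m h φ p)) ^ 4 +
    (1/24 : ℝ) * ((φ (p.1 + 1, p.2) + Dx m h φ p)) ^ 4 +
    (1/24 : ℝ) * ((φ (p.1 + 1, p.2) - Dx m h φ p)) ^ 4 +
    (1/24 : ℝ) * ((φ (p.1 + 1, p.2) + Dy m h φ p)) ^ 4 +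
    (1/24 : ℝ) * ((φ (p.1 + 1, p.2) - Dy m h φ p)) ^ 4 +
    (1/96 : ℝ) * ((φ (p.1 + 1, p.2) + Dx m h φ p + Dy m h φ p)) ^ 4 +
    (1/96 : ℝ) * ((φ (p.1 + 1, p.2) - Dx m h φ p - Dy m h φ p)) ^ 4 +
    (1/96 : ℝ) * ((φ (p.1 + 1, p.2) + Dx m h φ p - Dy m h φ p)) ^ 4 +
    (1/96 : ℝ) * ((φ (p.1 + 1, p.2) - Dx m h φ p + Dy m h φ p)) ^ 4 +
    (1/24 : ℝ) * ((φ (p.1, p.2 + 1) + Dx m h φ p)) ^ 4 +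
    (1/24 : ℝ) * ((φ (p.1, p.2 + 1) - Dx m h φ p)) ^ 4 +
    (1/24 : ℝ) * ((φ (p.1, p.2 + 1) + Dy m h φ p)) ^ 4 +
    (1/24 : ℝ) * ((φ (p.1, p.2 + 1) - Dy m h φ p)) ^ 4 +
    (1/96 : ℝ) * ((φ (p.1, p.2 + 1) + Dx m h φ p + Dy m h φ p)) ^ 4 +
    (1/96 : ℝ) * ((φ (p.1, p.2 + 1) - Dx m h φ p - Dy m h φ p)) ^ 4 +
    (1/96 : ℝ) * ((φ (p.1, p.2 + 1) + Dx m h φ p - Dy m h φ p)) ^ 4 +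
    (1/96 : ℝ) * ((φ (p.1, p.2 + 1) - Dx m h φ p + Dy m h φ p)) ^ 4 +
    (1/24 : ℝ) * ((φ (p.1 + 1, p.2 + 1) + Dx m h φ p)) ^ 4 +
    (1/24 : ℝ) * ((φ (p.1 + 1, p.2 + 1) - Dx m h φ p)) ^ 4 +
    (1/24 : ℝ) * ((φ (p.1 + 1, p.2 + 1) + Dy m h φ p)) ^ 4 +
    (1/24 : ℝ) * ((φ (p.1 + 1, p.2 + 1) - Dy m h φ p)) ^ 4 +
    (1/96 : ℝ) * ((φ (p.1 + 1, p.2 + 1) + Dx m h φ p + Dy m h φ p)) ^ 4 +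
    (1/96 : ℝ) * ((φ (p.1 + 1, p.2 + 1) - Dx m h φ p - Dy m h φ p)) ^ 4 +
    (1/96 : ℝ) * ((φ (p.1 + 1, p.2 + 1) + Dx m h φ p - Dy m h φ p)) ^ 4 +
    (1/96 : ℝ) * ((φ (p.1 + 1, p.2 + 1) - Dx m h φ p + Dy m h φ p)) ^ 4

lemma Tm_convex (m : ℕ) [NeZero m] (h A : ℝ) (hA : 1 ≤ A) (p : ZMod m × ZMod m) :
    ConvexOn ℝ (univ : Set (ZMod m × ZMod m → ℝ)) (Tm m h A p) := by
  unfold Tm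
  have t0 : ConvexOn ℝ (univ : Set (ZMod m × ZMod m → ℝ)) (fun φ : ZMod m × ZMod m → ℝ => ((A - 1/2) * (2/3)) * ((Dx m h φ p)) ^ 4) :=
    convexOn_smul_pow4 _ (by nlinarith) _ (by refine ⟨fun x y => ?_, fun r x => ?_⟩ <;> simp only [Dx, Dy, Pi.add_apply, Pi.smul_apply, smul_eq_mul] <;> ring)
  have t1 : ConvexOn ℝ (univ : Set (ZMod m × ZMod m → ℝ)) (fun φ : ZMod m × ZMod m → ℝ => ((A - 1/2) * (2/3)) * ((Dy m h φ p)) ^ 4) :=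
    convexOn_smul_pow4 _ (by nlinarith) _ (by refine ⟨fun x y => ?_, fun r x => ?_⟩ <;> simp only [Dx, Dy, Pi.add_apply, Pi.smul_apply, smul_eq_mul] <;> ring)
  have t2 : ConvexOn ℝ (univ : Set (ZMod m × ZMod m → ℝ)) (fun φ : ZMod m × ZMod m → ℝ => ((A - 1/2) * (1/6)) * ((Dx m h φ p + Dy m h φ p)) ^ 4) :=
    convexOn_smul_pow4 _ (by nlinarith) _ (by refine ⟨fun x y => ?_, fun r x => ?_⟩ <;> simp only [Dx, Dy, Pi.add_apply, Pi.smul_apply, smul_eq_mul] <;> ring)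
  have t3 : ConvexOn ℝ (univ : Set (ZMod m × ZMod m → ℝ)) (fun φ : ZMod m × ZMod m → ℝ => ((A - 1/2) * (1/6)) * ((Dx m h φ p - Dy m h φ p)) ^ 4) :=
    convexOn_smul_pow4 _ (by nlinarith) _ (by refine ⟨fun x y => ?_, fun r x => ?_⟩ <;> simp only [Dx, Dy, Pi.add_apply, Pi.smul_apply, smul_eq_mul] <;> ring)
  have t4 : ConvexOn ℝ (univ : Set (ZMod m × ZMod m → ℝ)) (fun φ : ZMod m × ZMod m → ℝ => (1/24 : ℝ) * ((φ p + Dx m h φ p)) ^ 4) :=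
    convexOn_smul_pow4 _ (by nlinarith) _ (by refine ⟨fun x y => ?_, fun r x => ?_⟩ <;> simp only [Dx, Dy, Pi.add_apply, Pi.smul_apply, smul_eq_mul] <;> ring)
  have t5 : ConvexOn ℝ (univ : Set (ZMod m × ZMod m → ℝ)) (fun φ : ZMod m × ZMod m → ℝ => (1/24 : ℝ) * ((φ p - Dx m h φ p)) ^ 4) :=
    convexOn_smul_pow4 _ (by nlinarith) _ (by refine ⟨fun x y => ?_, fun r x => ?_⟩ <;> simp only [Dx, Dy, Pi.add_apply, Pi.smul_apply, smul_eq_mul] <;> ring)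
  have t6 : ConvexOn ℝ (univ : Set (ZMod m × ZMod m → ℝ)) (fun φ : ZMod m × ZMod m → ℝ => (1/24 : ℝ) * ((φ p + Dy m h φ p)) ^ 4) :=
    convexOn_smul_pow4 _ (by nlinarith) _ (by refine ⟨fun x y => ?_, fun r x => ?_⟩ <;> simp only [Dx, Dy, Pi.add_apply, Pi.smul_apply, smul_eq_mul] <;> ring)
  have t7 : ConvexOn ℝ (univ : Set (ZMod m × ZMod m → ℝ)) (fun φ : ZMod m × ZMod m → ℝ => (1/24 : ℝ) * ((φ p - Dy m h φ p)) ^ 4) :=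
    convexOn_smul_pow4 _ (by nlinarith) _ (by refine ⟨fun x y => ?_, fun r x => ?_⟩ <;> simp only [Dx, Dy, Pi.add_apply, Pi.smul_apply, smul_eq_mul] <;> ring)
  have t8 : ConvexOn ℝ (univ : Set (ZMod m × ZMod m → ℝ)) (fun φ : ZMod m × ZMod m → ℝ => (1/96 : ℝ) * ((φ p + Dx m h φ p + Dy m h φ p)) ^ 4) :=
    convexOn_smul_pow4 _ (by nlinarith) _ (by refine ⟨fun x y => ?_, fun r x => ?_⟩ <;> simp only [Dx, Dy, Pi.add_apply, Pi.smul_apply, smul_eq_mul] <;> ring)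
  have t9 : ConvexOn ℝ (univ : Set (ZMod m × ZMod m → ℝ)) (fun φ : ZMod m × ZMod m → ℝ => (1/96 : ℝ) * ((φ p - Dx m h φ p - Dy m h φ p)) ^ 4) :=
    convexOn_smul_pow4 _ (by nlinarith) _ (by refine ⟨fun x y => ?_, fun r x => ?_⟩ <;> simp only [Dx, Dy, Pi.add_apply, Pi.smul_apply, smul_eq_mul] <;> ring)
  have t10 : ConvexOn ℝ (univ : Set (ZMod m × ZMod m → ℝ)) (fun φ : ZMod m × ZMod m → ℝ => (1/96 : ℝ) * ((φ p + Dx m h φ p - Dy m h φ p)) ^ 4) :=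
    convexOn_smul_pow4 _ (by nlinarith) _ (by refine ⟨fun x y => ?_, fun r x => ?_⟩ <;> simp only [Dx, Dy, Pi.add_apply, Pi.smul_apply, smul_eq_mul] <;> ring)
  have t11 : ConvexOn ℝ (univ : Set (ZMod m × ZMod m → ℝ)) (fun φ : ZMod m × ZMod m → ℝ => (1/96 : ℝ) * ((φ p - Dx m h φ p + Dy m h φ p)) ^ 4) :=
    convexOn_smul_pow4 _ (by nlinarith) _ (by refine ⟨fun x y => ?_, fun r x => ?_⟩ <;> simp only [Dx, Dy, Pi.add_apply, Pi.smul_apply, smul_eq_mul] <;> ring)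
  have t12 : ConvexOn ℝ (univ : Set (ZMod m × ZMod m → ℝ)) (fun φ : ZMod m × ZMod m → ℝ => (1/24 : ℝ) * ((φ (p.1 + 1, p.2) + Dx m h φ p)) ^ 4) :=
    convexOn_smul_pow4 _ (by nlinarith) _ (by refine ⟨fun x y => ?_, fun r x => ?_⟩ <;> simp only [Dx, Dy, Pi.add_apply, Pi.smul_apply, smul_eq_mul] <;> ring)
  have t13 : ConvexOn ℝ (univ : Set (ZMod m × ZMod m → ℝ)) (fun φ : ZMod m × ZMod m → ℝ => (1/24 : ℝ) * ((φ (p.1 + 1, p.2) - Dx m h φ p)) ^ 4) :=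
    convexOn_smul_pow4 _ (by nlinarith) _ (by refine ⟨fun x y => ?_, fun r x => ?_⟩ <;> simp only [Dx, Dy, Pi.add_apply, Pi.smul_apply, smul_eq_mul] <;> ring)
  have t14 : ConvexOn ℝ (univ : Set (ZMod m × ZMod m → ℝ)) (fun φ : ZMod m × ZMod m → ℝ => (1/24 : ℝ) * ((φ (p.1 + 1, p.2) + Dy m h φ p)) ^ 4) :=
    convexOn_smul_pow4 _ (by nlinarith) _ (by refine ⟨fun x y => ?_, fun r x => ?_⟩ <;> simp only [Dx, Dy, Pi.add_apply, Pi.smul_apply, smul_eq_mul] <;> ring)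
  have t15 : ConvexOn ℝ (univ : Set (ZMod m × ZMod m → ℝ)) (fun φ : ZMod m × ZMod m → ℝ => (1/24 : ℝ) * ((φ (p.1 + 1, p.2) - Dy m h φ p)) ^ 4) :=
    convexOn_smul_pow4 _ (by nlinarith) _ (by refine ⟨fun x y => ?_, fun r x => ?_⟩ <;> simp only [Dx, Dy, Pi.add_apply, Pi.smul_apply, smul_eq_mul] <;> ring)
  have t16 : ConvexOn ℝ (univ : Set (ZMod m × ZMod m → ℝ)) (fun φ : ZMod m × ZMod m → ℝ => (1/96 : ℝ) * ((φ (p.1 + 1, p.2) + Dx m h φ p + Dy m h φ p)) ^ 4) :=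
    convexOn_smul_pow4 _ (by nlinarith) _ (by refine ⟨fun x y => ?_, fun r x => ?_⟩ <;> simp only [Dx, Dy, Pi.add_apply, Pi.smul_apply, smul_eq_mul] <;> ring)
  have t17 : ConvexOn ℝ (univ : Set (ZMod m × ZMod m → ℝ)) (fun φ : ZMod m × ZMod m → ℝ => (1/96 : ℝ) * ((φ (p.1 + 1, p.2) - Dx m h φ p - Dy m h φ p)) ^ 4) :=
    convexOn_smul_pow4 _ (by nlinarith) _ (by refine ⟨fun x y => ?_, fun r x => ?_⟩ <;> simp only [Dx, Dy, Pi.add_apply, Pi.smul_apply, smul_eq_mul] <;> ring)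
  have t18 : ConvexOn ℝ (univ : Set (ZMod m × ZMod m → ℝ)) (fun φ : ZMod m × ZMod m → ℝ => (1/96 : ℝ) * ((φ (p.1 + 1, p.2) + Dx m h φ p - Dy m h φ p)) ^ 4) :=
    convexOn_smul_pow4 _ (by nlinarith) _ (by refine ⟨fun x y => ?_, fun r x => ?_⟩ <;> simp only [Dx, Dy, Pi.add_apply, Pi.smul_apply, smul_eq_mul] <;> ring)
  have t19 : ConvexOn ℝ (univ : Set (ZMod m × ZMod m → ℝ)) (fun φ : ZMod m × ZMod m → ℝ => (1/96 : ℝ) * ((φ (p.1 + 1, p.2) - Dx m h φ p + Dy m h φ p)) ^ 4) :=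
    convexOn_smul_pow4 _ (by nlinarith) _ (by refine ⟨fun x y => ?_, fun r x => ?_⟩ <;> simp only [Dx, Dy, Pi.add_apply, Pi.smul_apply, smul_eq_mul] <;> ring)
  have t20 : ConvexOn ℝ (univ : Set (ZMod m × ZMod m → ℝ)) (fun φ : ZMod m × ZMod m → ℝ => (1/24 : ℝ) * ((φ (p.1, p.2 + 1) + Dx m h φ p)) ^ 4) :=
    convexOn_smul_pow4 _ (by nlinarith) _ (by refine ⟨fun x y => ?_, fun r x => ?_⟩ <;> simp only [Dx, Dy, Pi.add_apply, Pi.smul_apply, smul_eq_mul] <;> ring)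
  have t21 : ConvexOn ℝ (univ : Set (ZMod m × ZMod m → ℝ)) (fun φ : ZMod m × ZMod m → ℝ => (1/24 : ℝ) * ((φ (p.1, p.2 + 1) - Dx m h φ p)) ^ 4) :=
    convexOn_smul_pow4 _ (by nlinarith) _ (by refine ⟨fun x y => ?_, fun r x => ?_⟩ <;> simp only [Dx, Dy, Pi.add_apply, Pi.smul_apply, smul_eq_mul] <;> ring)
  have t22 : ConvexOn ℝ (univ : Set (ZMod m × ZMod m → ℝ)) (fun φ : ZMod m × ZMod m → ℝ => (1/24 : ℝ) * ((φ (p.1, p.2 + 1) + Dy m h φ p)) ^ 4) :=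
    convexOn_smul_pow4 _ (by nlinarith) _ (by refine ⟨fun x y => ?_, fun r x => ?_⟩ <;> simp only [Dx, Dy, Pi.add_apply, Pi.smul_apply, smul_eq_mul] <;> ring)
  have t23 : ConvexOn ℝ (univ : Set (ZMod m × ZMod m → ℝ)) (fun φ : ZMod m × ZMod m → ℝ => (1/24 : ℝ) * ((φ (p.1, p.2 + 1) - Dy m h φ p)) ^ 4) :=
    convexOn_smul_pow4 _ (by nlinarith) _ (by refine ⟨fun x y => ?_, fun r x => ?_⟩ <;> simp only [Dx, Dy, Pi.add_apply, Pi.smul_apply, smul_eq_mul] <;> ring)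
  have t24 : ConvexOn ℝ (univ : Set (ZMod m × ZMod m → ℝ)) (fun φ : ZMod m × ZMod m → ℝ => (1/96 : ℝ) * ((φ (p.1, p.2 + 1) + Dx m h φ p + Dy m h φ p)) ^ 4) :=
    convexOn_smul_pow4 _ (by nlinarith) _ (by refine ⟨fun x y => ?_, fun r x => ?_⟩ <;> simp only [Dx, Dy, Pi.add_apply, Pi.smul_apply, smul_eq_mul] <;> ring)
  have t25 : ConvexOn ℝ (univ : Set (ZMod m × ZMod m → ℝ)) (fun φ : ZMod m × ZMod m → ℝ => (1/96 : ℝ) * ((φ (p.1, p.2 + 1) - Dx m h φ p - Dy m h φ p)) ^ 4) :=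
    convexOn_smul_pow4 _ (by nlinarith) _ (by refine ⟨fun x y => ?_, fun r x => ?_⟩ <;> simp only [Dx, Dy, Pi.add_apply, Pi.smul_apply, smul_eq_mul] <;> ring)
  have t26 : ConvexOn ℝ (univ : Set (ZMod m × ZMod m → ℝ)) (fun φ : ZMod m × ZMod m → ℝ => (1/96 : ℝ) * ((φ (p.1, p.2 + 1) + Dx m h φ p - Dy m h φ p)) ^ 4) :=
    convexOn_smul_pow4 _ (by nlinarith) _ (by refine ⟨fun x y => ?_, fun r x => ?_⟩ <;> simp only [Dx, Dy, Pi.add_apply, Pi.smul_apply, smul_eq_mul] <;> ring)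
  have t27 : ConvexOn ℝ (univ : Set (ZMod m × ZMod m → ℝ)) (fun φ : ZMod m × ZMod m → ℝ => (1/96 : ℝ) * ((φ (p.1, p.2 + 1) - Dx m h φ p + Dy m h φ p)) ^ 4) :=
    convexOn_smul_pow4 _ (by nlinarith) _ (by refine ⟨fun x y => ?_, fun r x => ?_⟩ <;> simp only [Dx, Dy, Pi.add_apply, Pi.smul_apply, smul_eq_mul] <;> ring)
  have t28 : ConvexOn ℝ (univ : Set (ZMod m × ZMod m → ℝ)) (fun φ : ZMod m × ZMod m → ℝ => (1/24 : ℝ) * ((φ (p.1 + 1, p.2 + 1) + Dx m h φ p)) ^ 4) :=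
    convexOn_smul_pow4 _ (by nlinarith) _ (by refine ⟨fun x y => ?_, fun r x => ?_⟩ <;> simp only [Dx, Dy, Pi.add_apply, Pi.smul_apply, smul_eq_mul] <;> ring)
  have t29 : ConvexOn ℝ (univ : Set (ZMod m × ZMod m → ℝ)) (fun φ : ZMod m × ZMod m → ℝ => (1/24 : ℝ) * ((φ (p.1 + 1, p.2 + 1) - Dx m h φ p)) ^ 4) :=
    convexOn_smul_pow4 _ (by nlinarith) _ (by refine ⟨fun x y => ?_, fun r x => ?_⟩ <;> simp only [Dx, Dy, Pi.add_apply, Pi.smul_apply, smul_eq_mul] <;> ring)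
  have t30 : ConvexOn ℝ (univ : Set (ZMod m × ZMod m → ℝ)) (fun φ : ZMod m × ZMod m → ℝ => (1/24 : ℝ) * ((φ (p.1 + 1, p.2 + 1) + Dy m h φ p)) ^ 4) :=
    convexOn_smul_pow4 _ (by nlinarith) _ (by refine ⟨fun x y => ?_, fun r x => ?_⟩ <;> simp only [Dx, Dy, Pi.add_apply, Pi.smul_apply, smul_eq_mul] <;> ring)
  have t31 : ConvexOn ℝ (univ : Set (ZMod m × ZMod m → ℝ)) (fun φ : ZMod m × ZMod m → ℝ => (1/24 : ℝ) * ((φ (p.1 + 1, p.2 + 1) - Dy m h φ p)) ^ 4) :=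
    convexOn_smul_pow4 _ (by nlinarith) _ (by refine ⟨fun x y => ?_, fun r x => ?_⟩ <;> simp only [Dx, Dy, Pi.add_apply, Pi.smul_apply, smul_eq_mul] <;> ring)
  have t32 : ConvexOn ℝ (univ : Set (ZMod m × ZMod m → ℝ)) (fun φ : ZMod m × ZMod m → ℝ => (1/96 : ℝ) * ((φ (p.1 + 1, p.2 + 1) + Dx m h φ p + Dy m h φ p)) ^ 4) :=
    convexOn_smul_pow4 _ (by nlinarith) _ (by refine ⟨fun x y => ?_, fun r x => ?_⟩ <;> simp only [Dx, Dy, Pi.add_apply, Pi.smul_apply, smul_eq_mul] <;> ring)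
  have t33 : ConvexOn ℝ (univ : Set (ZMod m × ZMod m → ℝ)) (fun φ : ZMod m × ZMod m → ℝ => (1/96 : ℝ) * ((φ (p.1 + 1, p.2 + 1) - Dx m h φ p - Dy m h φ p)) ^ 4) :=
    convexOn_smul_pow4 _ (by nlinarith) _ (by refine ⟨fun x y => ?_, fun r x => ?_⟩ <;> simp only [Dx, Dy, Pi.add_apply, Pi.smul_apply, smul_eq_mul] <;> ring)
  have t34 : ConvexOn ℝ (univ : Set (ZMod m × ZMod m → ℝ)) (fun φ : ZMod m × ZMod m → ℝ => (1/96 : ℝ) * ((φ (p.1 + 1, p.2 + 1) + Dx m h φ p - Dy m h φ p)) ^ 4) :=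
    convexOn_smul_pow4 _ (by nlinarith) _ (by refine ⟨fun x y => ?_, fun r x => ?_⟩ <;> simp only [Dx, Dy, Pi.add_apply, Pi.smul_apply, smul_eq_mul] <;> ring)
  have t35 : ConvexOn ℝ (univ : Set (ZMod m × ZMod m → ℝ)) (fun φ : ZMod m × ZMod m → ℝ => (1/96 : ℝ) * ((φ (p.1 + 1, p.2 + 1) - Dx m h φ p + Dy m h φ p)) ^ 4) :=
    convexOn_smul_pow4 _ (by nlinarith) _ (by refine ⟨fun x y => ?_, fun r x => ?_⟩ <;> simp only [Dx, Dy, Pi.add_apply, Pi.smul_apply, smul_eq_mul] <;> ring)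
  exact convexOn_add' (convexOn_add' (convexOn_add' (convexOn_add' (convexOn_add' (convexOn_add' (convexOn_add' (convexOn_add' (convexOn_add' (convexOn_add' (convexOn_add' (convexOn_add' (convexOn_add' (convexOn_add' (convexOn_add' (convexOn_add' (convexOn_add' (convexOn_add' (convexOn_add' (convexOn_add' (convexOn_add' (convexOn_add' (convexOn_add' (convexOn_add' (convexOn_add' (convexOn_add' (convexOn_add' (convexOn_add' (convexOn_add' (convexOn_add' (convexOn_add' (convexOn_add' (convexOn_add' (convexOn_add' (convexOn_add' (t0) t1) t2) t3) t4) t5) t6) t7) t8) t9) t10) t11) t12) t13) t14) t15) t16) t17) t18) t19) t20) t21) t22) t23) t24) t25) t26) t27) t28) t29) t30) t31) t32) t33) t34) t35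
section Reindex

lemma shift_sum (m : ℕ) [NeZero m] (g : ZMod m × ZMod m → ℝ) (s t : ZMod m) :
    ∑ p : ZMod m × ZMod m, g (p.1 + s, p.2 + t) = ∑ p : ZMod m × ZMod m, g p :=
  Fintype.sum_equiv ((Equiv.addRight s).prodCongr (Equiv.addRight t))
    (fun p => g (p.1 + s, p.2 + t)) g (fun _ => rfl)

lemma reindex_sub (m : ℕ) [NeZero m] (f g : ZMod m × ZMod m → ℝ) (s t : ZMod m) :
    ∑ q : ZMod m × ZMod m, g q * f (q.1 - s, q.2 - t) =
      ∑ p : ZMod m × ZMod m, g (p.1 + s, p.2 + t) * f p :=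
  (Fintype.sum_equiv ((Equiv.addRight s).prodCongr (Equiv.addRight t))
    (fun p => g (p.1 + s, p.2 + t) * f p)
    (fun q => g q * f (q.1 - s, q.2 - t))
    (fun p => by obtain ⟨i, j⟩ := p; simp [add_sub_cancel_right])).symm

end Reindex

lemma strict_part (m : ℕ) [NeZero m] (K : ℝ) (hK : 0 < K) :
    StrictConvexOn ℝ (univ : Set (ZMod m × ZMod m → ℝ))
      (fun φ : ZMod m × ZMod m → ℝ => K * ∑ q : ZMod m × ZMod m, φ q ^ 4) := by
  refine ⟨convex_univ, fun x _ y _ hxy a b ha hb hab => ?_⟩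
  have key : ∑ q : ZMod m × ZMod m, (a • x + b • y) q ^ 4 <
      ∑ q : ZMod m × ZMod m, (a * x q ^ 4 + b * y q ^ 4) := by
    obtain ⟨q0, hq0⟩ := Function.ne_iff.1 hxy
    refine Finset.sum_lt_sum (fun q _ => ?_) ⟨q0, Finset.mem_univ _, ?_⟩
    · have h4 := (Even.convexOn_pow (𝕜 := ℝ) (by decide : Even 4)).2
        (mem_univ (x q)) (mem_univ (y q)) ha.le hb.le hab
      simpa [smul_eq_mul] using h4
    · have h4 := (Even.strictConvexOn_pow (by decide : Even 4) (by norm_num)).2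
        (mem_univ (x q0)) (mem_univ (y q0)) hq0 ha hb hab
      simpa [smul_eq_mul] using h4
  have hmul := mul_lt_mul_of_pos_left key hK
  rw [Finset.sum_add_distrib, ← Finset.mul_sum, ← Finset.mul_sum] at hmul
  simp only [smul_eq_mul]
  calc K * ∑ q : ZMod m × ZMod m, (a * x q + b * y q) ^ 4
      = K * ∑ q : ZMod m × ZMod m, ((a • x + b • y) q) ^ 4 := by
        simp [smul_eq_mul]
    _ < K * (a * ∑ q : ZMod m × ZMod m, x q ^ 4) + K * (b * ∑ q : ZMod m × ZMod m, y q ^ 4) := by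
        rw [mul_add] at hmul; exact hmul
    _ = a * (K * ∑ q : ZMod m × ZMod m, x q ^ 4) + b * (K * ∑ q : ZMod m × ZMod m, y q ^ 4) := by
        ring
section SumLemmas

variable {E : Type*} [AddCommGroup E] [Module ℝ E]

lemma convexOn_finset_sum {ι : Type*} (t : Finset ι) {f : ι → E → ℝ}
    (hf : ∀ i ∈ t, ConvexOn ℝ (univ : Set E) (f i)) :
    ConvexOn ℝ (univ : Set E) (fun x => ∑ i ∈ t, f i x) := by
  have key : ConvexOn ℝ (univ : Set E) (∑ i ∈ t, f i) :=
    Finset.sum_induction f (fun F => ConvexOn ℝ (univ : Set E) F)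
      (fun a b ha hb => ha.add hb) (convexOn_const (0 : ℝ) convex_univ) hf
  have : (fun x => ∑ i ∈ t, f i x) = ∑ i ∈ t, f i := by
    funext x; rw [Finset.sum_apply]
  rwa [this]

end SumLemmas

lemma sum_Tm (m : ℕ) [NeZero m] (h A : ℝ) (φ : ZMod m × ZMod m → ℝ) :
    ∑ p : ZMod m × ZMod m, Tm m h A p φ =
      A * ∑ p : ZMod m × ZMod m, (Dx m h φ p ^ 2 + Dy m h φ p ^ 2) ^ 2
      + (5 / 6) * ∑ p : ZMod m × ZMod m, φ p ^ 4
      + 3 * ∑ p : ZMod m × ZMod m,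
          φ p ^ 2 * Av m (fun q => Dx m h φ q ^ 2 + Dy m h φ q ^ 2) p := by
  have hpt : ∀ p : ZMod m × ZMod m, Tm m h A p φ =
      A * (Dx m h φ p ^ 2 + Dy m h φ p ^ 2) ^ 2 + ((5 / 24) * φ p ^ 4 + (5 / 24) * φ (p.1 + 1, p.2) ^ 4 + (5 / 24) * φ (p.1, p.2 + 1) ^ 4 + (5 / 24) * φ (p.1 + 1, p.2 + 1) ^ 4) + ((3 / 4) * (φ p ^ 2 * (Dx m h φ p ^ 2 + Dy m h φ p ^ 2)) + (3 / 4) * (φ (p.1 + 1, p.2) ^ 2 * (Dx m h φ p ^ 2 + Dy m h φ p ^ 2)) + (3 / 4) * (φ (p.1, p.2 + 1) ^ 2 * (Dx m h φ p ^ 2 + Dy m h φ p ^ 2)) + (3 / 4) * (φ (p.1 + 1, p.2 + 1) ^ 2 * (Dx m h φ p ^ 2 + Dy m h φ p ^ 2))) :=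
    fun p => by simp only [Tm]; ring
  have r1 : ∑ p : ZMod m × ZMod m, φ (p.1 + 1, p.2) ^ 4 = ∑ p : ZMod m × ZMod m, φ p ^ 4 :=
    Fintype.sum_equiv ((Equiv.addRight (1 : ZMod m)).prodCongr (Equiv.refl (ZMod m))) _ _ (fun x => rfl)
  have r2 : ∑ p : ZMod m × ZMod m, φ (p.1, p.2 + 1) ^ 4 = ∑ p : ZMod m × ZMod m, φ p ^ 4 :=
    Fintype.sum_equiv ((Equiv.refl (ZMod m)).prodCongr (Equiv.addRight (1 : ZMod m))) _ _ (fun x => rfl)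
  have r3 : ∑ p : ZMod m × ZMod m, φ (p.1 + 1, p.2 + 1) ^ 4 = ∑ p : ZMod m × ZMod m, φ p ^ 4 :=
    Fintype.sum_equiv ((Equiv.addRight (1 : ZMod m)).prodCongr (Equiv.addRight (1 : ZMod m))) _ _ (fun x => rfl)
  have c1 : ∑ q : ZMod m × ZMod m, φ q ^ 2 * (Dx m h φ (q.1 - 1, q.2) ^ 2 + Dy m h φ (q.1 - 1, q.2) ^ 2) =
      ∑ p : ZMod m × ZMod m, φ (p.1 + 1, p.2) ^ 2 * (Dx m h φ p ^ 2 + Dy m h φ p ^ 2) :=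
    (Fintype.sum_equiv ((Equiv.addRight (1 : ZMod m)).prodCongr (Equiv.refl (ZMod m))) _ _ (fun x => by obtain ⟨i, j⟩ := x; simp [add_sub_cancel_right])).symm
  have c2 : ∑ q : ZMod m × ZMod m, φ q ^ 2 * (Dx m h φ (q.1, q.2 - 1) ^ 2 + Dy m h φ (q.1, q.2 - 1) ^ 2) =
      ∑ p : ZMod m × ZMod m, φ (p.1, p.2 + 1) ^ 2 * (Dx m h φ p ^ 2 + Dy m h φ p ^ 2) :=
    (Fintype.sum_equiv ((Equiv.refl (ZMod m)).prodCongr (Equiv.addRight (1 : ZMod m))) _ _ (fun x => by obtain ⟨i, j⟩ := x; simp [add_sub_cancel_right])).symm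
  have c3 : ∑ q : ZMod m × ZMod m, φ q ^ 2 * (Dx m h φ (q.1 - 1, q.2 - 1) ^ 2 + Dy m h φ (q.1 - 1, q.2 - 1) ^ 2) =
      ∑ p : ZMod m × ZMod m, φ (p.1 + 1, p.2 + 1) ^ 2 * (Dx m h φ p ^ 2 + Dy m h φ p ^ 2) :=
    (Fintype.sum_equiv ((Equiv.addRight (1 : ZMod m)).prodCongr (Equiv.addRight (1 : ZMod m))) _ _ (fun x => by obtain ⟨i, j⟩ := x; simp [add_sub_cancel_right])).symm
  have hAv : ∑ p : ZMod m × ZMod m, φ p ^ 2 * Av m (fun q => Dx m h φ q ^ 2 + Dy m h φ q ^ 2) p =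
      (∑ p : ZMod m × ZMod m, φ p ^ 2 * (Dx m h φ p ^ 2 + Dy m h φ p ^ 2) + ∑ p : ZMod m × ZMod m, φ (p.1 + 1, p.2) ^ 2 * (Dx m h φ p ^ 2 + Dy m h φ p ^ 2) + ∑ p : ZMod m × ZMod m, φ (p.1, p.2 + 1) ^ 2 * (Dx m h φ p ^ 2 + Dy m h φ p ^ 2) + ∑ p : ZMod m × ZMod m, φ (p.1 + 1, p.2 + 1) ^ 2 * (Dx m h φ p ^ 2 + Dy m h φ p ^ 2)) / 4 := by
    have e : ∀ q : ZMod m × ZMod m, φ q ^ 2 * Av m (fun q' => Dx m h φ q' ^ 2 + Dy m h φ q' ^ 2) q =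
        (φ q ^ 2 * (Dx m h φ q ^ 2 + Dy m h φ q ^ 2) + φ q ^ 2 * (Dx m h φ (q.1 - 1, q.2) ^ 2 + Dy m h φ (q.1 - 1, q.2) ^ 2) + φ q ^ 2 * (Dx m h φ (q.1, q.2 - 1) ^ 2 + Dy m h φ (q.1, q.2 - 1) ^ 2) + φ q ^ 2 * (Dx m h φ (q.1 - 1, q.2 - 1) ^ 2 + Dy m h φ (q.1 - 1, q.2 - 1) ^ 2)) / 4 :=
      fun q => by simp only [Av]; ring
    rw [Finset.sum_congr rfl (fun q _ => e q), ← Finset.sum_div, Finset.sum_add_distrib,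
      Finset.sum_add_distrib, Finset.sum_add_distrib, c1, c2, c3]
  rw [Finset.sum_congr rfl (fun p _ => hpt p)]
  simp only [Finset.sum_add_distrib, ← Finset.mul_sum]
  rw [r1, r2, r3, hAv]
  ring
theorem Hh_strictly_convex (m : ℕ) [NeZero m] (hm : 2 ≤ m)
    (h A : ℝ) (hh : 0 < h) (hA : 1 ≤ A) :
    StrictConvexOn ℝ (univ : Set (ZMod m × ZMod m → ℝ)) (Hh m h A) := by
  have hfun : Hh m h A = fun φ : ZMod m × ZMod m → ℝ =>
      (A - 5 / 6) * h ^ 2 * ∑ q : ZMod m × ZMod m, φ q ^ 4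
        + h ^ 2 * ∑ p : ZMod m × ZMod m, Tm m h A p φ := by
    funext φ
    simp only [Hh]
    rw [sum_Tm m h A φ]
    ring
  rw [hfun]
  have h1 : StrictConvexOn ℝ (univ : Set (ZMod m × ZMod m → ℝ))
      (fun φ : ZMod m × ZMod m → ℝ =>
        (A - 5 / 6) * h ^ 2 * ∑ q : ZMod m × ZMod m, φ q ^ 4) := by
    have := strict_part m ((A - 5 / 6) * h ^ 2) (by nlinarith)
    simpa [mul_assoc] using this
  have hs : ConvexOn ℝ (univ : Set (ZMod m × ZMod m → ℝ))
      (fun φ : ZMod m × ZMod m → ℝ => ∑ p : ZMod m × ZMod m, Tm m h A p φ) :=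
    convexOn_finset_sum _ (fun p _ => Tm_convex m h A hA p)
  have h2 : ConvexOn ℝ (univ : Set (ZMod m × ZMod m → ℝ))
      (fun φ : ZMod m × ZMod m → ℝ => h ^ 2 * ∑ p : ZMod m × ZMod m, Tm m h A p φ) := by
    have := hs.smul (c := h ^ 2) (by positivity)
    simpa [smul_eq_mul] using this
  exact h1.add_convexOn h2
end
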